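/- Let I ⊆ S be a bihomogeneous ideal and (a,b) ∈ Z_{>0} × Z_{≥0} with a > 1. For k = 0,…,n set J_{k−1} = (I, x_0,…,x_{k−1}) (with J_{−1} = I). If (in(J_{k−1}) : x_k)_{(a−1,b)} = (in(J_{k−1}) + m_y·(in(J_{k−1}) : x_k))_{(a−1,b)} for all k = 0,…,n, then in(I) has no minimal generator of bidegree (a,b). -/

import Mathlib

open MvPolynomial Finset

noncomputable section

namespace Bigraded

/-- The variables of `S = k[x_0,…,x_n, y_0,…,y_m]`: `Sum.inl i` is `x_i`, `Sum.inr j` is `y_j`. -/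
abbrev Vars (n m : ℕ) : Type := Fin (n + 1) ⊕ Fin (m + 1)

/-- The bigraded polynomial ring `S = k[x_0,…,x_n, y_0,…,y_m]`. -/
abbrev PolyS (K : Type) [CommSemiring K] (n m : ℕ) : Type := MvPolynomial (Vars n m) K

/-- The Laurent polynomial ring in the same variables, receiving all localizations of `S`
at products of the variables. -/
abbrev Laur (K : Type) [CommSemiring K] (n m : ℕ) : Type := AddMonoidAlgebra K (Vars n m → ℤ)

variable (K : Type) [Field K] (n m : ℕ)

/-- The bidegree of an exponent vector: total degree in the `x`-variables and in the
`y`-variables. -/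
def bdeg (d : Vars n m →₀ ℕ) : ℤ × ℤ :=
  (∑ i : Fin (n + 1), (d (Sum.inl i) : ℤ), ∑ j : Fin (m + 1), (d (Sum.inr j) : ℤ))

/-- `p` is bihomogeneous of bidegree `(a, b)`. -/
def IsBihomOf (p : PolyS K n m) (a b : ℤ) : Prop :=
  ∀ d ∈ p.support, bdeg n m d = (a, b)

/-- `p` is bihomogeneous (of some bidegree). -/
def IsBihom (p : PolyS K n m) : Prop := ∃ a b : ℤ, IsBihomOf K n m p a b

/-- A bihomogeneous ideal: an ideal generated by bihomogeneous polynomials. -/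
def IsBihomIdeal (I : Ideal (PolyS K n m)) : Prop :=
  ∃ G : Set (PolyS K n m), (∀ g ∈ G, IsBihom K n m g) ∧ I = Ideal.span G

/-- The ideal `m_x = (x_0, …, x_n)`. -/
def mxI : Ideal (PolyS K n m) :=
  Ideal.span (Set.range fun i : Fin (n + 1) => (X (Sum.inl i) : PolyS K n m))

/-- The ideal `m_y = (y_0, …, y_m)`. -/
def myI : Ideal (PolyS K n m) :=
  Ideal.span (Set.range fun j : Fin (m + 1) => (X (Sum.inr j) : PolyS K n m))

/-- Equality of the bidegree-`(a,b)` components of two ideals: `I_{(a,b)} = J_{(a,b)}`. -/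
def eqInDeg (I J : Ideal (PolyS K n m)) (a b : ℤ) : Prop :=
  ∀ p : PolyS K n m, IsBihomOf K n m p a b → (p ∈ I ↔ p ∈ J)

/-- The colon ideal `(I : h)`. -/
def colonF (I : Ideal (PolyS K n m)) (h : PolyS K n m) : Ideal (PolyS K n m) :=
  Submodule.colon I (Ideal.span {h})

/-- The saturation `I^xsat = (I : m_x^∞)` of `I` with respect to `m_x`. -/
def xsat (I : Ideal (PolyS K n m)) : Ideal (PolyS K n m) :=
  ⨆ t : ℕ, Submodule.colon I (((mxI K n m) ^ t : Ideal (PolyS K n m)) : Set (PolyS K n m))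

/-- Vanishing of the bigraded Hilbert function of `S/I` at `(a,b)`, i.e.
`dim_k (S/I)_{(a,b)} = 0`, i.e. `S_{(a,b)} ⊆ I`. -/
def HFvanish (I : Ideal (PolyS K n m)) (a b : ℤ) : Prop :=
  ∀ p : PolyS K n m, IsBihomOf K n m p a b → p ∈ I

/-- `J` has a minimal generator of bidegree `(a,b)`, i.e. `J_{(a,b)} ≠ ((m_x + m_y)·J)_{(a,b)}`. -/
def HasMinGen (J : Ideal (PolyS K n m)) (a b : ℤ) : Prop :=
  ¬ eqInDeg K n m J ((mxI K n m ⊔ myI K n m) * J) a b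

/-- Position of a variable in the order `x_0, …, x_n, y_0, …, y_m`. -/
def idx : Vars n m → ℕ := Sum.elim (fun i => (i : ℕ)) (fun j => n + 1 + (j : ℕ))

/-- The degree reverse lexicographical comparison (for exponents of the same bidegree):
`x^d < x^e` iff the leftmost nonzero entry of `e - d` is negative. -/
def drlLT (d e : Vars n m →₀ ℕ) : Prop :=
  ∃ s : Vars n m, ((e s : ℤ) < (d s : ℤ)) ∧ ∀ t : Vars n m, idx n m t < idx n m s → e t = d t

/-- `monomial d 1` is the initial (leading) monomial of `f` for the DRL order with
`x_0 < … < x_n < y_0 < … < y_m`. -/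
def IsLead (f : PolyS K n m) (d : Vars n m →₀ ℕ) : Prop :=
  d ∈ f.support ∧ ∀ e ∈ f.support, e ≠ d → drlLT n m e d

/-- The initial ideal `in(I)` of a bihomogeneous ideal `I` for the DRL order
with `x_0 < … < x_n < y_0 < … < y_m`. -/
def inIdeal (I : Ideal (PolyS K n m)) : Ideal (PolyS K n m) :=
  Ideal.span {q : PolyS K n m | ∃ f ∈ I, ∃ d : Vars n m →₀ ℕ,
    IsBihom K n m f ∧ IsLead K n m f d ∧ q = monomial d (1 : K)}

/-- The linear `x`-form `∑ c_i x_i`. -/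
def xform (c : Fin (n + 1) → K) : PolyS K n m :=
  ∑ i : Fin (n + 1), MvPolynomial.C (c i) * X (Sum.inl i)

/-- `Q` holds for generic linear `x`-forms `h_0, …, h_{k-1}`, i.e. for all tuples in a nonempty
Zariski-open subset of `(S_{(1,0)})^k` (encoded by the non-vanishing of a nonzero polynomial
in the coefficients). -/
def GenericXForms (k : ℕ) (Q : (Fin k → PolyS K n m) → Prop) : Prop :=
  ∃ P : MvPolynomial (Fin k × Fin (n + 1)) K, P ≠ 0 ∧
    ∀ c : Fin k → Fin (n + 1) → K,
      MvPolynomial.eval (fun p => c p.1 p.2) P ≠ 0 → Q (fun j => xform K n m (c j))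

/-- The change of coordinates on `S` given by a pair of square matrices, acting on the
`x`-variables and the `y`-variables separately. -/
def uAlg (A : Matrix (Fin (n + 1)) (Fin (n + 1)) K) (B : Matrix (Fin (m + 1)) (Fin (m + 1)) K) :
    PolyS K n m →ₐ[K] PolyS K n m :=
  MvPolynomial.aeval (Sum.elim
    (fun i => ∑ j : Fin (n + 1), MvPolynomial.C (A i j) * X (Sum.inl j))
    (fun i => ∑ j : Fin (m + 1), MvPolynomial.C (B i j) * X (Sum.inr j)))

/-- `Q` holds for a generic pair of matrices `(A, B) ∈ GL(n+1) × GL(m+1)`, i.e. on a nonempty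
Zariski-open subset of `GL(n+1) × GL(m+1)` (encoded by the non-vanishing of a polynomial in the
entries which does not vanish identically on `GL(n+1) × GL(m+1)`). -/
def GenericPair
    (Q : Matrix (Fin (n + 1)) (Fin (n + 1)) K → Matrix (Fin (m + 1)) (Fin (m + 1)) K → Prop) :
    Prop :=
  ∃ P : MvPolynomial ((Fin (n + 1) × Fin (n + 1)) ⊕ (Fin (m + 1) × Fin (m + 1))) K,
    (∃ (A : Matrix (Fin (n + 1)) (Fin (n + 1)) K) (B : Matrix (Fin (m + 1)) (Fin (m + 1)) K),
      IsUnit A.det ∧ IsUnit B.det ∧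
      MvPolynomial.eval (Sum.elim (fun p => A p.1 p.2) (fun p => B p.1 p.2)) P ≠ 0) ∧
    ∀ (A : Matrix (Fin (n + 1)) (Fin (n + 1)) K) (B : Matrix (Fin (m + 1)) (Fin (m + 1)) K),
      IsUnit A.det → IsUnit B.det →
      MvPolynomial.eval (Sum.elim (fun p => A p.1 p.2) (fun p => B p.1 p.2)) P ≠ 0 → Q A B

/-- `Bg` is the bigeneric initial ideal of `I`: for all `u = (A,B)` in a nonempty Zariski-open
subset of `GL(n+1) × GL(m+1)` one has `in(u ∘ I) = Bg`, for the DRL order with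
`x_0 < … < x_n < y_0 < … < y_m`. -/
def IsBigin (I Bg : Ideal (PolyS K n m)) : Prop :=
  GenericPair K n m (fun A B => inIdeal K n m (Ideal.map (uAlg K n m A B) I) = Bg)

/-- The canonical embedding of `S` into the Laurent polynomial ring. -/
def toLaur : PolyS K n m →ₐ[K] Laur K n m :=
  MvPolynomial.aeval (fun s : Vars n m =>
    (AddMonoidAlgebra.single (Pi.single s (1 : ℤ)) (1 : K) : Laur K n m))

/-- The bidegree of a Laurent exponent vector. -/
def ldeg (v : Vars n m → ℤ) : ℤ × ℤ :=
  (∑ i : Fin (n + 1), v (Sum.inl i), ∑ j : Fin (m + 1), v (Sum.inr j))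

/-- A Laurent polynomial is bihomogeneous of bidegree `(a, b)`. -/
def LHom (z : Laur K n m) (a b : ℤ) : Prop :=
  ∀ v ∈ z.coeff.support, ldeg n m v = (a, b)

/-- Membership in the image of the localization `I_{g_T}` inside the Laurent polynomials, where
`g_T = ∏_{k ∈ T} g_k` and the monomial generator `g_k` has exponent vector `E k`:
`z ∈ I_{g_T}` iff `g_T^t · z` comes from `I` for some `t`. -/
def memD {N : ℕ} (E : Fin N → Vars n m → ℤ) (I : Ideal (PolyS K n m))
    (T : Finset (Fin N)) (z : Laur K n m) : Prop :=
  ∃ (t : ℕ) (w : PolyS K n m), w ∈ I ∧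
    (AddMonoidAlgebra.single ((t : ℤ) • ∑ k ∈ T, E k) (1 : K) : Laur K n m) * z = toLaur K n m w

/-- The Čech differential (all localizations being viewed inside the Laurent polynomials,
the component maps are the identity, with the usual signs). -/
def dC {N : ℕ} (c : Finset (Fin N) → Laur K n m) (T : Finset (Fin N)) : Laur K n m :=
  ∑ j ∈ T, ((-1 : ℤ) ^ ((T.filter (fun i => i < j)).card)) • c (T.erase j)

/-- Vanishing of the bidegree-`(a,b)` component of the `i`-th Čech cohomology of `I` with respect
to the monomial generators with exponents `E 0, …, E (N-1)` (for `i ≥ 1` this is the vanishing of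
`H^i_J(I)_{(a,b)}` where `J` is generated by these monomials): every bihomogeneous cocycle of
bidegree `(a,b)` in Čech degree `i` is a coboundary. -/
def cechVanish {N : ℕ} (E : Fin N → Vars n m → ℤ) (I : Ideal (PolyS K n m))
    (i : ℕ) (a b : ℤ) : Prop :=
  ∀ c : Finset (Fin N) → Laur K n m,
    (∀ T, T.card = i → memD K n m E I T (c T) ∧ LHom K n m (c T) a b) →
    (∀ T, T.card ≠ i → c T = 0) →
    (∀ T, T.card = i + 1 → dC K n m c T = 0) →
    ∃ c' : Finset (Fin N) → Laur K n m,
      (∀ T, T.card + 1 = i → memD K n m E I T (c' T)) ∧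
      (∀ T, T.card + 1 ≠ i → c' T = 0) ∧
      (∀ T, T.card = i → dC K n m c' T = c T)

/-- Exponent vectors of the generators `x_0, …, x_n` of `m_x`. -/
def Ex : Fin (n + 1) → Vars n m → ℤ := fun k =>
  Sum.elim (fun i => if i = k then 1 else 0) (fun _ => 0)

/-- Exponent vectors of the generators `x_i y_j` of the irrelevant ideal `b = m_x · m_y`. -/
def Eb : Fin ((n + 1) * (m + 1)) → Vars n m → ℤ := fun k =>
  Sum.elim (fun i => if i = (finProdFinEquiv.symm k).1 then 1 else 0)
           (fun j => if j = (finProdFinEquiv.symm k).2 then 1 else 0)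

/-- `H^i_{m_x}(I)_{(a,b)} = 0` (for `i ≥ 1`), via the Čech complex on `x_0, …, x_n`. -/
def lcxVanish (I : Ideal (PolyS K n m)) (i : ℕ) (a b : ℤ) : Prop :=
  cechVanish K n m (Ex n m) I i a b

/-- `H^i_b(I)_{(a,b)} = 0` (for `i ≥ 1`), via the Čech complex on the `x_i y_j`. -/
def lcbVanish (I : Ideal (PolyS K n m)) (i : ℕ) (a b : ℤ) : Prop :=
  cechVanish K n m (Eb n m) I i a b

/-- The partial regularity region `xreg(I)`: all `(a,b)` such that `H^i_{m_x}(I)_{(a',b')} = 0`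
for all `i ≥ 1` and all `(a',b') ≥ (a - i + 1, b)`. -/
def xreg (I : Ideal (PolyS K n m)) : Set (ℤ × ℤ) :=
  {ab | ∀ i : ℕ, 1 ≤ i → ∀ a' b' : ℤ, ab.1 - (i : ℤ) + 1 ≤ a' → ab.2 ≤ b' →
    lcxVanish K n m I i a' b'}

/-- The bigraded Castelnuovo–Mumford regularity region of Maclagan–Smith: all `(a,b)` such that
`H^i_b(I)_{(a',b')} = 0` for all `i ≥ 1`, all `λ_x + λ_y = i - 1` and all
`(a',b') ≥ (a - λ_x, b - λ_y)`. -/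
def regMS (I : Ideal (PolyS K n m)) : Set (ℤ × ℤ) :=
  {ab | ∀ i : ℕ, 1 ≤ i → ∀ lx ly : ℕ, lx + ly + 1 = i →
    ∀ a' b' : ℤ, ab.1 - (lx : ℤ) ≤ a' → ab.2 - (ly : ℤ) ≤ b' →
      lcbVanish K n m I i a' b'}

/-- The cohomological dimension `cd_{m_x}(I) = max({0} ∪ {i > 0 : H^i_{m_x}(I) ≠ 0})`. -/
def cdx (I : Ideal (PolyS K n m)) : ℕ :=
  sSup ({0} ∪ {i : ℕ | 0 < i ∧ ∃ a b : ℤ, ¬ lcxVanish K n m I i a b})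

/-- The ideal generated by the variables `x_0, …, x_{k-1}`. -/
def firstXVars (k : ℕ) : Ideal (PolyS K n m) :=
  Ideal.span {g : PolyS K n m | ∃ j : Fin (n + 1), (j : ℕ) < k ∧ g = X (Sum.inl j)}

/-- The ideal generated by `h_0, …, h_{k-1}`. -/
def firstForms {N : ℕ} (h : Fin N → PolyS K n m) (k : ℕ) : Ideal (PolyS K n m) :=
  Ideal.span {g : PolyS K n m | ∃ j : Fin N, (j : ℕ) < k ∧ g = h j}

/-!
Since `in(I)` is a monomial ideal, it suffices to show that every leading monomial `x^d` of
bidegree `(a, b)` is a variable times a multiple of another leading monomial of `I`. Let `x_k` be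
the first `x`-variable dividing `x^d` (there is one as `a > 0`). Then `x^d / x_k` lies in
`(in(J_{k-1}) : x_k)` in bidegree `(a - 1, b)`, hence by hypothesis in
`in(J_{k-1}) + m_y (in(J_{k-1}) : x_k)`; either way `x^d` is a variable times a multiple of a
leading monomial `x^e` of `J_{k-1}`. Dividing `x^d`, the monomial `x^e` avoids `x_0, …, x_{k-1}`,
and for the reverse lexicographic order such a leading monomial of `I + (x_0, …, x_{k-1})` is one
of `I`: removing from a bihomogeneous witness its part in `(x_0, …, x_{k-1})` leaves the leading
term in place, every monomial of that part being smaller than `x^e`.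
-/

section MonomialIdeal

variable {σ R : Type*} [CommSemiring R]

theorem _root_.Finsupp.exists_single_add_le_of_lt {u v : σ →₀ ℕ} (h : u < v) :
    ∃ s, Finsupp.single s 1 + u ≤ v := by
  obtain ⟨s, hs⟩ : ∃ s, u s < v s := by
    by_contra! hvu
    exact h.not_ge hvu
  refine ⟨s, fun t => ?_⟩
  rcases eq_or_ne s t with rfl | hst
  · simp only [Finsupp.add_apply, Finsupp.single_eq_same]
    omega
  · simpa [Finsupp.single_apply, hst] using h.le t

theorem _root_.MvPolynomial.mem_of_forall_monomial_mem {J : Ideal (MvPolynomial σ R)}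
    {p : MvPolynomial σ R} (h : ∀ v ∈ p.support, monomial v (1 : R) ∈ J) : p ∈ J := by
  rw [p.as_sum]
  refine J.sum_mem fun v hv => ?_
  rw [← mul_one (p.coeff v), ← C_mul_monomial]
  exact J.mul_mem_left _ (h v hv)

theorem _root_.MvPolynomial.colon_span_monomial_X_le (S : Set (σ →₀ ℕ)) (s : σ) :
    (Ideal.span ((fun d => monomial d (1 : R)) '' S)).colon
        ((Ideal.span {X s} : Ideal (MvPolynomial σ R)) : Set (MvPolynomial σ R)) ≤
      Ideal.span ((fun e => monomial e (1 : R)) ''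
        {e | ∃ d ∈ S, d ≤ e + Finsupp.single s 1}) := by
  intro r hr
  rw [Ideal.mem_colon_span_singleton, mem_ideal_span_monomial_image] at hr
  rw [mem_ideal_span_monomial_image]
  intro e he
  exact ⟨e, hr _ (by rw [support_mul_X]; exact Finset.mem_map_of_mem _ he), le_rfl⟩

theorem _root_.MvPolynomial.span_X_image_mul_span_monomial_le (A : Set σ)
    (T : Set (σ →₀ ℕ)) :
    Ideal.span (X '' A) * Ideal.span ((fun e => monomial e (1 : R)) '' T) ≤
      Ideal.span ((fun e => monomial e (1 : R)) ''
        {e | ∃ a ∈ A, ∃ t ∈ T, e = Finsupp.single a 1 + t}) := by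
  rw [Ideal.span_mul_span]
  refine Ideal.span_mono ?_
  rintro _ ⟨_, ⟨a, ha, rfl⟩, _, ⟨t, ht, rfl⟩, rfl⟩
  exact ⟨_, ⟨a, ha, t, ht, rfl⟩, by simp only [X, monomial_mul, one_mul]⟩

theorem _root_.MvPolynomial.exists_single_add_le_of_monomial_mem_sup_mul_colon [Nontrivial R]
    {S : Set (σ →₀ ℕ)} {A : Set σ} {ν : σ →₀ ℕ} (s : σ)
    (h : monomial ν (1 : R) ∈ Ideal.span ((fun d => monomial d (1 : R)) '' S) ⊔
      Ideal.span (X '' A) *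
        (Ideal.span ((fun d => monomial d (1 : R)) '' S)).colon
          ((Ideal.span {X s} : Ideal (MvPolynomial σ R)) : Set (MvPolynomial σ R))) :
    ∃ t, ∃ d ∈ S, Finsupp.single t 1 + d ≤ ν + Finsupp.single s 1 := by
  have hle := sup_le_sup_left ((Ideal.mul_mono_right (colon_span_monomial_X_le S s)).trans
    (span_X_image_mul_span_monomial_le A _)) _ h
  rw [← Ideal.span_union, ← Set.image_union, mem_ideal_span_monomial_image] at hle
  obtain ⟨e, he, heν⟩ := hle ν (by classical simp [coeff_monomial])
  rcases he with hS | ⟨a, -, e', ⟨d, hd, hde'⟩, rfl⟩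
  · exact ⟨s, e, hS, by rw [add_comm]; exact add_le_add_left heν _⟩
  · refine ⟨a, d, hd, ?_⟩
    calc Finsupp.single a 1 + d ≤ Finsupp.single a 1 + (e' + Finsupp.single s 1) :=
          add_le_add_right hde' _
      _ = Finsupp.single a 1 + e' + Finsupp.single s 1 := (add_assoc _ _ _).symm
      _ ≤ ν + Finsupp.single s 1 := add_le_add_left heν _

end MonomialIdeal

def bidegWeight : Vars n m → ℤ × ℤ := Sum.elim (fun _ => (1, 0)) (fun _ => (0, 1))

section

variable {K n m}

attribute [local instance] weightedGradedAlgebra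

theorem weight_bidegWeight (d : Vars n m →₀ ℕ) :
    Finsupp.weight (bidegWeight n m) d = bdeg n m d := by
  rw [Finsupp.weight_eq_sum, Fintype.sum_sum_type]
  ext <;> simp [bidegWeight, bdeg, Prod.fst_sum, Prod.snd_sum]

theorem bdeg_add (u v : Vars n m →₀ ℕ) : bdeg n m (u + v) = bdeg n m u + bdeg n m v := by
  simp only [← weight_bidegWeight, map_add]

theorem bdeg_single_inl (i : Fin (n + 1)) :
    bdeg n m (Finsupp.single (Sum.inl i) 1) = (1, 0) := by
  rw [← weight_bidegWeight, Finsupp.weight_single, one_smul]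
  rfl

theorem isBihomOf_iff_isWeightedHomogeneous (p : PolyS K n m) (a b : ℤ) :
    IsBihomOf K n m p a b ↔ p.IsWeightedHomogeneous (bidegWeight n m) (a, b) := by
  simp only [IsBihomOf, IsWeightedHomogeneous, weight_bidegWeight, mem_support_iff]

theorem isBihomOf_monomial {d : Vars n m →₀ ℕ} {a b : ℤ} (h : bdeg n m d = (a, b)) :
    IsBihomOf K n m (monomial d 1) a b := by
  intro e he
  rwa [Finset.mem_singleton.mp (support_monomial_subset he)]

theorem IsBihomIdeal.weightedHomogeneousComponent_mem {I : Ideal (PolyS K n m)}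
    (hI : IsBihomIdeal K n m I) (c : ℤ × ℤ) {p : PolyS K n m} (hp : p ∈ I) :
    weightedHomogeneousComponent (bidegWeight n m) c p ∈ I := by
  obtain ⟨G, hG, rfl⟩ := hI
  have hhom : (Ideal.span G).IsHomogeneous (weightedHomogeneousSubmodule K (bidegWeight n m)) :=
    Ideal.homogeneous_span _ _ fun g hg => by
      obtain ⟨a, b, hab⟩ := hG g hg
      exact ⟨(a, b), (isBihomOf_iff_isWeightedHomogeneous g a b).mp hab⟩
  exact (mem_iff_weightedHomogeneousComponent_mem K (bidegWeight n m) hhom p).mp hp c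

theorem firstXVars_eq_span_X_image (k : ℕ) :
    firstXVars K n m k =
      Ideal.span (X '' {s : Vars n m | ∃ j : Fin (n + 1), (j : ℕ) < k ∧ s = Sum.inl j}) := by
  rw [firstXVars, Set.image]
  congr 1
  ext g
  constructor
  · rintro ⟨j, hj, rfl⟩
    exact ⟨_, ⟨j, hj, rfl⟩, rfl⟩
  · rintro ⟨_, ⟨j, hj, rfl⟩, rfl⟩
    exact ⟨j, hj, rfl⟩

theorem mem_firstXVars_iff {k : ℕ} {q : PolyS K n m} :
    q ∈ firstXVars K n m k ↔
      ∀ e ∈ q.support, ∃ j : Fin (n + 1), (j : ℕ) < k ∧ e (Sum.inl j) ≠ 0 := by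
  rw [firstXVars_eq_span_X_image, mem_ideal_span_X_image]
  simp

theorem weightedHomogeneousComponent_mem_firstXVars {k : ℕ} (c : ℤ × ℤ) {q : PolyS K n m}
    (hq : q ∈ firstXVars K n m k) :
    weightedHomogeneousComponent (bidegWeight n m) c q ∈ firstXVars K n m k := by
  classical
  rw [mem_firstXVars_iff] at hq ⊢
  intro e he
  rw [support_weightedHomogeneousComponent, Finset.mem_filter] at he
  exact hq e he.1

def leadExps (I : Ideal (PolyS K n m)) : Set (Vars n m →₀ ℕ) :=
  {d | ∃ f ∈ I, IsBihom K n m f ∧ IsLead K n m f d}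

theorem inIdeal_eq_span_leadExps (I : Ideal (PolyS K n m)) :
    inIdeal K n m I = Ideal.span ((fun d => monomial d (1 : K)) '' leadExps I) := by
  rw [inIdeal, Set.image]
  congr 1
  ext q
  constructor
  · rintro ⟨f, hf, d, hbihom, hlead, rfl⟩
    exact ⟨d, ⟨f, hf, hbihom, hlead⟩, rfl⟩
  · rintro ⟨d, ⟨f, hf, hbihom, hlead⟩, rfl⟩
    exact ⟨f, hf, d, hbihom, hlead, rfl⟩

theorem monomial_mem_inIdeal_iff {I : Ideal (PolyS K n m)} {e : Vars n m →₀ ℕ} :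
    monomial e (1 : K) ∈ inIdeal K n m I ↔ ∃ d ∈ leadExps I, d ≤ e := by
  classical
  rw [inIdeal_eq_span_leadExps, mem_ideal_span_monomial_image]
  simp [support_monomial]

theorem leadExps_mono {I J : Ideal (PolyS K n m)} (h : I ≤ J) : leadExps I ⊆ leadExps J :=
  fun _ ⟨f, hf, hbihom, hlead⟩ => ⟨f, h hf, hbihom, hlead⟩

theorem exists_min_x_var {e : Vars n m →₀ ℕ} (h : ∃ j, e (Sum.inl j) ≠ 0) :
    ∃ i, e (Sum.inl i) ≠ 0 ∧ ∀ j < i, e (Sum.inl j) = 0 := by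
  obtain ⟨i, hi, hmin⟩ := wellFounded_lt.has_min {j | e (Sum.inl j) ≠ 0} h
  exact ⟨i, hi, fun j hj => by_contra fun hne => hmin j hne hj⟩

theorem drlLT_of_x_var_lt {k : ℕ} {d e : Vars n m →₀ ℕ}
    (hd : ∀ j : Fin (n + 1), (j : ℕ) < k → d (Sum.inl j) = 0)
    (he : ∃ j : Fin (n + 1), (j : ℕ) < k ∧ e (Sum.inl j) ≠ 0) :
    drlLT n m e d := by
  obtain ⟨j, hjk, hj⟩ := he
  obtain ⟨i, hi, hmin⟩ := exists_min_x_var ⟨j, hj⟩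
  have hik : (i : ℕ) < k := lt_of_le_of_lt (not_lt.mp fun hji => hj (hmin j hji)) hjk
  refine ⟨Sum.inl i, by rw [hd i hik]; exact_mod_cast Nat.pos_of_ne_zero hi, ?_⟩
  rintro (t | t) ht
  · simp only [idx, Sum.elim_inl] at ht
    rw [hmin t ht, hd t (ht.trans hik)]
  · simp only [idx, Sum.elim_inl, Sum.elim_inr] at ht
    omega

theorem IsLead.sub_of_mem_firstXVars {f q : PolyS K n m} {d : Vars n m →₀ ℕ} {k : ℕ}
    (hf : IsLead K n m f d) (hd : ∀ j : Fin (n + 1), (j : ℕ) < k → d (Sum.inl j) = 0)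
    (hq : q ∈ firstXVars K n m k) : IsLead K n m (f - q) d := by
  classical
  rw [mem_firstXVars_iff] at hq
  have hdq : q.coeff d = 0 := notMem_support_iff.mp fun hmem => by
    obtain ⟨j, hj, hne⟩ := hq d hmem
    exact hne (hd j hj)
  refine ⟨?_, fun e he hne => ?_⟩
  · rw [mem_support_iff, coeff_sub, hdq, sub_zero]
    exact mem_support_iff.mp hf.1
  · rcases Finset.mem_union.mp (support_sub _ f q he) with hef | heq
    · exact hf.2 e hef hne
    · exact drlLT_of_x_var_lt hd (hq e heq)

theorem mem_leadExps_of_mem_leadExps_sup_firstXVars {I : Ideal (PolyS K n m)}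
    (hI : IsBihomIdeal K n m I) {k : ℕ} {d : Vars n m →₀ ℕ}
    (hd : d ∈ leadExps (I ⊔ firstXVars K n m k))
    (hdx : ∀ j : Fin (n + 1), (j : ℕ) < k → d (Sum.inl j) = 0) :
    d ∈ leadExps I := by
  obtain ⟨f, hf, ⟨a, b, hab⟩, hlead⟩ := hd
  obtain ⟨p, hp, q, hq, rfl⟩ := Submodule.mem_sup.mp hf
  have hsplit : weightedHomogeneousComponent (bidegWeight n m) (a, b) p =
      (p + q) - weightedHomogeneousComponent (bidegWeight n m) (a, b) q := by
    rw [← weightedHomogeneousComponent_eq_self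
      ((isBihomOf_iff_isWeightedHomogeneous _ a b).mp hab), map_add, add_sub_cancel_right]
  refine ⟨_, hI.weightedHomogeneousComponent_mem (a, b) hp, ⟨a, b,
    (isBihomOf_iff_isWeightedHomogeneous _ a b).mpr
      (weightedHomogeneousComponent_isWeightedHomogeneous _ _)⟩, ?_⟩
  rw [hsplit]
  exact hlead.sub_of_mem_firstXVars hdx (weightedHomogeneousComponent_mem_firstXVars _ hq)

theorem myI_eq_span_X_image : myI K n m = Ideal.span (X '' Set.range Sum.inr) := by
  rw [myI, ← Set.range_comp]
  rfl

theorem X_mem_mxI_sup_myI (s : Vars n m) : (X s : PolyS K n m) ∈ mxI K n m ⊔ myI K n m := by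
  rcases s with i | j
  · exact Ideal.mem_sup_left (Ideal.subset_span ⟨i, rfl⟩)
  · exact Ideal.mem_sup_right (Ideal.subset_span ⟨j, rfl⟩)

theorem monomial_mem_mul_of_single_add_le {J : Ideal (PolyS K n m)} {u d : Vars n m →₀ ℕ}
    (s : Vars n m) (hu : monomial u (1 : K) ∈ J) (h : Finsupp.single s 1 + u ≤ d) :
    monomial d (1 : K) ∈ (mxI K n m ⊔ myI K n m) * J := by
  obtain ⟨c, rfl⟩ := le_iff_exists_add.mp h
  have hfactor : monomial (Finsupp.single s 1 + u + c) (1 : K) =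
      monomial c 1 * (X s * monomial u 1) := by
    rw [X, monomial_mul, monomial_mul, one_mul, one_mul, add_comm c]
  rw [hfactor]
  exact Ideal.mul_mem_left _ _ (Ideal.mul_mem_mul (X_mem_mxI_sup_myI s) hu)

theorem monomial_mem_mul_inIdeal_of_mem_leadExps {I : Ideal (PolyS K n m)}
    (hI : IsBihomIdeal K n m I) {a b : ℤ} (ha : a ≠ 0)
    (hcolon : ∀ k : Fin (n + 1),
      eqInDeg K n m
        (colonF K n m (inIdeal K n m (I ⊔ firstXVars K n m (k : ℕ))) (X (Sum.inl k)))
        (inIdeal K n m (I ⊔ firstXVars K n m (k : ℕ)) ⊔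
          myI K n m *
            colonF K n m (inIdeal K n m (I ⊔ firstXVars K n m (k : ℕ))) (X (Sum.inl k)))
        (a - 1) b)
    {d : Vars n m →₀ ℕ} (hd : d ∈ leadExps I) (hbd : bdeg n m d = (a, b)) :
    monomial d (1 : K) ∈ (mxI K n m ⊔ myI K n m) * inIdeal K n m I := by
  obtain ⟨k, hk, hkmin⟩ := exists_min_x_var (e := d) <| by
    by_contra! hzero
    exact ha (by simpa [bdeg, hzero] using (congrArg Prod.fst hbd).symm)
  obtain ⟨ν, rfl⟩ : ∃ ν, d = ν + Finsupp.single (Sum.inl k) 1 :=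
    ⟨_, (tsub_add_cancel_of_le
      (Finsupp.single_le_iff.mpr (Nat.one_le_iff_ne_zero.mpr hk))).symm⟩
  have hν : monomial ν (1 : K) ∈
      colonF K n m (inIdeal K n m (I ⊔ firstXVars K n m k)) (X (Sum.inl k)) := by
    rw [colonF, Ideal.mem_colon_span_singleton, X, monomial_mul, one_mul]
    exact monomial_mem_inIdeal_iff.mpr ⟨_, leadExps_mono le_sup_left hd, le_rfl⟩
  have hνdeg : bdeg n m ν = (a - 1, b) := by
    rw [bdeg_add, bdeg_single_inl] at hbd
    rw [eq_sub_of_add_eq hbd, Prod.mk_sub_mk, sub_zero]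
  have hmem := (hcolon k _ (isBihomOf_monomial hνdeg)).mp hν
  rw [colonF, inIdeal_eq_span_leadExps, myI_eq_span_X_image] at hmem
  obtain ⟨t, e, he, hle⟩ := exists_single_add_le_of_monomial_mem_sup_mul_colon _ hmem
  have hex : ∀ j : Fin (n + 1), (j : ℕ) < k → e (Sum.inl j) = 0 := fun j hj =>
    Nat.le_zero.mp (hkmin j hj ▸ le_add_self.trans hle (Sum.inl j))
  exact monomial_mem_mul_of_single_add_le t
    (monomial_mem_inIdeal_iff.mpr ⟨e, mem_leadExps_of_mem_leadExps_sup_firstXVars hI he hex,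
      le_rfl⟩) hle

end

theorem statement_12 (I : Ideal (PolyS K n m)) (hI : IsBihomIdeal K n m I)
    (a b : ℤ) (ha : 1 < a)
    (h2 : ∀ k : Fin (n + 1),
      eqInDeg K n m
        (colonF K n m (inIdeal K n m (I ⊔ firstXVars K n m (k : ℕ))) (X (Sum.inl k)))
        (inIdeal K n m (I ⊔ firstXVars K n m (k : ℕ)) ⊔
          myI K n m *
            colonF K n m (inIdeal K n m (I ⊔ firstXVars K n m (k : ℕ))) (X (Sum.inl k)))
        (a - 1) b) :
    ¬ HasMinGen K n m (inIdeal K n m I) a b := by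
  refine not_not.mpr fun p hp => ⟨fun hpI => ?_, fun h => Ideal.mul_le_right h⟩
  refine mem_of_forall_monomial_mem fun v hv => ?_
  rw [inIdeal_eq_span_leadExps, mem_ideal_span_monomial_image] at hpI
  obtain ⟨u, hu, huv⟩ := hpI v hv
  rcases huv.eq_or_lt with rfl | hlt
  · exact monomial_mem_mul_inIdeal_of_mem_leadExps hI (by omega) h2 hu (hp u hv)
  · obtain ⟨s, hs⟩ := Finsupp.exists_single_add_le_of_lt hlt
    exact monomial_mem_mul_of_single_add_le s (monomial_mem_inIdeal_iff.mpr ⟨u, hu, le_rfl⟩) hs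

end Bigraded
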